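/- arXiv:2602.09990 — 4 statements merged into one kernel-verified Lean document; each statement's English description precedes it below -/
import Mathlib

section
/- Let P be a polynomial of degree m ≥ 1 with complex coefficients, and suppose |P(z)| ≤ M for all |z| ≤ r (r > 0). Then for every R ≥ r and all z with |z| < R, one has |P'(z)| ≤ e·M·m·R^(m−1)/r^m. -/
/-!
The reversed polynomial `u ^ m * P (u⁻¹)` is bounded by `M / r ^ m` on `‖u‖ ≤ r⁻¹` by the maximum
modulus principle, so `‖P w‖ ≤ M * (s / r) ^ m` whenever `‖w‖ ≤ s` and `r ≤ s`. Cauchy's estimate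
on the circle of radius `R / m` about `z` then bounds `‖P' z‖` by
`M * m * R ^ (m - 1) / r ^ m * (1 + 1 / m) ^ m`, and `(1 + 1 / m) ^ m ≤ e`.
-/

open Polynomial Metric

namespace Polynomial

theorem eval_reflect_eq_pow_mul {K : Type*} [Field K] {P : K[X]} {m : ℕ} (hP : P.natDegree ≤ m)
    {w : K} (hw : w ≠ 0) : (P.reflect m).eval w = w ^ m * P.eval w⁻¹ := by
  let := invertibleOfNonzero (inv_ne_zero hw)
  have h := eval₂_reflect_mul_pow (RingHom.id K) w⁻¹ m P hP
  rw [invOf_eq_inv, inv_inv] at h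
  rw [← eval₂_id, ← eval₂_id, ← h, mul_left_comm, ← mul_pow, mul_inv_cancel₀ hw, one_pow, mul_one]

section GrowthOutsideDisk

variable {P : ℂ[X]} {m : ℕ} {M r : ℝ}

theorem norm_eval_reflect_le (hdeg : P.natDegree ≤ m) (hr : 0 < r)
    (hP : ∀ z : ℂ, ‖z‖ ≤ r → ‖P.eval z‖ ≤ M) {u : ℂ} (hu : ‖u‖ ≤ r⁻¹) :
    ‖(P.reflect m).eval u‖ ≤ M / r ^ m := by
  have hr' : r⁻¹ ≠ 0 := inv_ne_zero hr.ne'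
  refine Complex.norm_le_of_forall_mem_frontier_norm_le isBounded_ball
    (P.reflect m).differentiable.diffContOnCl (fun w hw => ?_)
    (by rwa [closure_ball _ hr', mem_closedBall_zero_iff])
  rw [frontier_ball _ hr', mem_sphere_zero_iff_norm] at hw
  have hw0 : w ≠ 0 := norm_ne_zero_iff.mp (hw ▸ hr')
  have hPw : ‖P.eval w⁻¹‖ ≤ M := hP _ (by rw [norm_inv, hw, inv_inv])
  calc ‖(P.reflect m).eval w‖ = ‖w‖ ^ m * ‖P.eval w⁻¹‖ := by
        rw [eval_reflect_eq_pow_mul hdeg hw0, norm_mul, norm_pow]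
    _ ≤ r⁻¹ ^ m * M := by rw [hw]; gcongr
    _ = M / r ^ m := by rw [inv_pow, inv_mul_eq_div]

theorem norm_eval_le_mul_div_pow (hdeg : P.natDegree ≤ m) (hr : 0 < r)
    (hP : ∀ z : ℂ, ‖z‖ ≤ r → ‖P.eval z‖ ≤ M) {s : ℝ} (hrs : r ≤ s) {w : ℂ} (hws : ‖w‖ ≤ s) :
    ‖P.eval w‖ ≤ M * (s / r) ^ m := by
  have hM : 0 ≤ M := (norm_nonneg _).trans (hP 0 (by simpa using hr.le))
  rcases le_or_gt ‖w‖ r with hwr | hwr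
  · calc ‖P.eval w‖ ≤ M := hP w hwr
      _ ≤ M * (s / r) ^ m := le_mul_of_one_le_right hM (one_le_pow₀ ((one_le_div hr).mpr hrs))
  have hw : 0 < ‖w‖ := hr.trans hwr
  have hQ := norm_eval_reflect_le hdeg hr hP (u := w⁻¹) (by rw [norm_inv]; exact inv_anti₀ hr hwr.le)
  calc ‖P.eval w‖ = ‖(P.reflect m).eval w⁻¹‖ * ‖w‖ ^ m := by
        rw [eval_reflect_eq_pow_mul hdeg (inv_ne_zero (norm_pos_iff.mp hw)), inv_inv, norm_mul,
          norm_pow, norm_inv, mul_right_comm, ← mul_pow, inv_mul_cancel₀ hw.ne', one_pow, one_mul]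
    _ ≤ M / r ^ m * s ^ m := by gcongr
    _ = M * (s / r) ^ m := by rw [div_pow, mul_div_assoc']; ring

end GrowthOutsideDisk

end Polynomial

theorem add_div_pow_div_div_eq {m : ℕ} (hm : m ≠ 0) {R : ℝ} (hR : R ≠ 0) :
    (R + R / m) ^ m / (R / m) = m * R ^ (m - 1) * (1 + (m : ℝ)⁻¹) ^ m := by
  obtain ⟨k, rfl⟩ : ∃ k, m = k + 1 := ⟨m - 1, by omega⟩
  have hk : ((k + 1 : ℕ) : ℝ) ≠ 0 := by positivity
  rw [Nat.add_sub_cancel, div_eq_mul_inv R, ← mul_one_add, mul_pow, pow_succ]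
  field_simp

/-- Bernstein-type estimate: if `P` is a polynomial of degree `m ≥ 1` with
`|P(z)| ≤ M` for `|z| ≤ r`, then for `R ≥ r` and `|z| < R` one has
`|P'(z)| ≤ e·M·m·R^(m-1)/r^m`. -/
theorem poly_deriv_bound (P : Polynomial ℂ) (m : ℕ) (hm : P.natDegree = m) (h1 : 1 ≤ m)
    (M r R : ℝ) (hr : 0 < r) (hrR : r ≤ R)
    (hP : ∀ z : ℂ, ‖z‖ ≤ r → ‖P.eval z‖ ≤ M) :
    ∀ z : ℂ, ‖z‖ < R →
      ‖(Polynomial.derivative P).eval z‖ ≤ Real.exp 1 * M * m * R ^ (m - 1) / r ^ m := by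
  intro z hz
  have hM : 0 ≤ M := (norm_nonneg _).trans (hP 0 (by simpa using hr.le))
  have hR : 0 < R := hr.trans_le hrR
  have hρ : 0 < R / m := by positivity
  -- Cauchy's estimate on the circle of radius `R / m` about `z`, which lies in `‖w‖ ≤ R + R / m`
  have cauchy : ‖(derivative P).eval z‖ ≤ M * ((R + R / m) / r) ^ m / (R / m) := by
    rw [← Polynomial.deriv]
    refine Complex.norm_deriv_le_of_forall_mem_sphere_norm_le hρ P.differentiable.diffContOnCl
      fun w hw => norm_eval_le_mul_div_pow hm.le hr hP (by linarith) ?_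
    rw [mem_sphere_iff_norm] at hw
    linarith [norm_le_norm_sub_add w z]
  calc ‖(derivative P).eval z‖ ≤ M * ((R + R / m) / r) ^ m / (R / m) := cauchy
    _ = M * m * R ^ (m - 1) / r ^ m * (1 + (m : ℝ)⁻¹) ^ m := by
        rw [div_pow, mul_div_assoc', mul_div_right_comm, mul_div_assoc,
          add_div_pow_div_div_eq (by omega) hR.ne']
        ring
    _ ≤ M * m * R ^ (m - 1) / r ^ m * Real.exp 1 := by gcongr; exact Real.one_add_inv_pow_le_exp
    _ = Real.exp 1 * M * m * R ^ (m - 1) / r ^ m := by ring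
end

section
/- For all real a, b and every sequence t_n → +∞, the ratio Γ(t_n + a)/Γ(t_n + b) is asymptotic to t_n^(a−b); more precisely, Γ(t+a)/Γ(t+b) = t^(a−b)·(1 + O(1/t)) as t → +∞. -/
/-!
With `L = logGammaRatio`, i.e. `L a t = log (Γ (t + a) / (Γ t * t ^ a))` for large `t`,
the ratio is `exp (L a t - L b t)`. For `0 ≤ s ≤ 1`, log-convexity of `Γ` on `[t, t + 1]`
and on `[t + s, t + s + 1]` (Wendel's inequality) squeezes `L s t` between
`log t - log (t + s)` and `0`, so `L s = O(1/t)`. The functional equation changes `L a` by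
`log (t + a) - log t = O(1/t)` when `a` moves by `1`, which reaches every real `a`.
-/

open Real Set Filter Asymptotics Topology

theorem isBigO_exp_sub_one {α : Type*} {l : Filter α} {f g : α → ℝ} (hf : f =O[l] g)
    (hg : Tendsto g l (𝓝 0)) : (fun x => exp (f x) - 1) =O[l] g := by
  have hexp : (fun u => exp u - exp 0) =O[𝓝 0] (fun u => u - 0) := (hasDerivAt_exp 0).isBigO_sub
  simp only [exp_zero, sub_zero] at hexp
  exact (hexp.comp_tendsto (hf.trans_tendsto hg)).trans hf

theorem exists_pos_abs_le_div_of_isBigO_inv {f : ℝ → ℝ} (hf : f =O[atTop] (fun t => t⁻¹)) :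
    ∃ C t₀ : ℝ, 0 < C ∧ 0 < t₀ ∧ ∀ t : ℝ, t₀ ≤ t → |f t| ≤ C / t := by
  obtain ⟨C, hC, hfC⟩ := hf.exists_pos
  obtain ⟨t₀, ht₀⟩ :=
    eventually_atTop.1 ((isBigOWith_iff.1 hfC).and (eventually_gt_atTop 0))
  refine ⟨C, max t₀ 1, hC, by positivity, fun t ht => ?_⟩
  obtain ⟨hbound, htpos⟩ := ht₀ t (le_of_max_le_left ht)
  simpa [abs_of_pos htpos, div_eq_mul_inv] using hbound

theorem isBigO_log_add_sub_log (a : ℝ) :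
    (fun t => log (t + a) - log t) =O[atTop] (fun t => t⁻¹) := by
  have hlog : (fun y => log y - log 1) =O[𝓝 1] (fun y => y - 1) :=
    (hasDerivAt_log one_ne_zero).isBigO_sub
  have hlim : Tendsto (fun t => 1 + a * t⁻¹) atTop (𝓝 1) := by
    simpa using (tendsto_inv_atTop_zero.const_mul a).const_add 1
  refine (hlog.comp_tendsto hlim).congr' ?_ ?_ |>.trans (isBigO_const_mul_self a _ _)
  · filter_upwards [eventually_gt_atTop 0, eventually_gt_atTop (-a)] with t ht hta
    have : 1 + a * t⁻¹ = (t + a) / t := by field_simp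
    rw [Function.comp_apply, log_one, sub_zero, this, log_div (by linarith) ht.ne']
  · exact .of_forall fun t => by simp

noncomputable def logGammaRatio (a t : ℝ) : ℝ := log (Gamma (t + a)) - log (Gamma t) - a * log t

theorem logGammaRatio_add_one {a t : ℝ} (hta : 0 < t + a) :
    logGammaRatio (a + 1) t = logGammaRatio a t + (log (t + a) - log t) := by
  rw [logGammaRatio, logGammaRatio, ← add_assoc, Gamma_add_one hta.ne',
    log_mul hta.ne' (Gamma_pos_of_pos hta).ne']
  ring

theorem isBigO_logGammaRatio_add_one_iff (a : ℝ) :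
    logGammaRatio (a + 1) =O[atTop] (fun t => t⁻¹) ↔
      logGammaRatio a =O[atTop] (fun t => t⁻¹) := by
  have hshift : logGammaRatio (a + 1) =ᶠ[atTop]
      fun t => logGammaRatio a t + (log (t + a) - log t) := by
    filter_upwards [eventually_gt_atTop (-a)] with t hta
    exact logGammaRatio_add_one (by linarith)
  rw [isBigO_congr hshift EventuallyEq.rfl]
  exact ⟨fun h => by simpa using h.sub (isBigO_log_add_sub_log a),
    fun h => h.add (isBigO_log_add_sub_log a)⟩

theorem logGammaRatio_nonpos {s t : ℝ} (ht : 0 < t) (hs₀ : 0 ≤ s) (hs₁ : s ≤ 1) :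
    logGammaRatio s t ≤ 0 := by
  have hconv := convexOn_log_Gamma.2 (mem_Ioi.2 ht) (mem_Ioi.2 (by linarith : 0 < t + 1))
    (sub_nonneg.2 hs₁) hs₀ (sub_add_cancel 1 s)
  simp only [Function.comp_apply, smul_eq_mul] at hconv
  rw [show (1 - s) * t + s * (t + 1) = t + s by ring, Gamma_add_one ht.ne',
    log_mul ht.ne' (Gamma_pos_of_pos ht).ne'] at hconv
  rw [logGammaRatio]
  linarith

theorem log_sub_log_add_le_logGammaRatio {s t : ℝ} (ht : 0 < t) (hs₀ : 0 ≤ s)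
    (hs₁ : s ≤ 1) :
    log t - log (t + s) ≤ logGammaRatio s t := by
  have hts : 0 < t + s := by linarith
  have hconv := convexOn_log_Gamma.2 (mem_Ioi.2 hts) (mem_Ioi.2 (by linarith : 0 < t + s + 1))
    hs₀ (sub_nonneg.2 hs₁) (add_sub_cancel s 1)
  simp only [Function.comp_apply, smul_eq_mul] at hconv
  rw [show s * (t + s) + (1 - s) * (t + s + 1) = t + 1 by ring, Gamma_add_one ht.ne',
    Gamma_add_one hts.ne', log_mul ht.ne' (Gamma_pos_of_pos ht).ne',
    log_mul hts.ne' (Gamma_pos_of_pos hts).ne'] at hconv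
  have hmono : log t ≤ log (t + s) := log_le_log ht (by linarith)
  rw [logGammaRatio]
  nlinarith [mul_nonneg hs₀ (sub_nonneg.2 hmono)]

theorem isBigO_logGammaRatio_of_mem_Icc {s : ℝ} (hs₀ : 0 ≤ s) (hs₁ : s ≤ 1) :
    logGammaRatio s =O[atTop] (fun t => t⁻¹) := by
  refine IsBigO.trans (.of_bound 1 ?_) (isBigO_log_add_sub_log s)
  filter_upwards [eventually_gt_atTop 0] with t ht
  have hmono : log t ≤ log (t + s) := log_le_log ht (by linarith)
  rw [norm_eq_abs, norm_eq_abs, one_mul, abs_le, abs_of_nonneg (sub_nonneg.2 hmono)]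
  constructor <;>
    linarith [logGammaRatio_nonpos ht hs₀ hs₁, log_sub_log_add_le_logGammaRatio ht hs₀ hs₁]

theorem isBigO_logGammaRatio (a : ℝ) : logGammaRatio a =O[atTop] (fun t => t⁻¹) := by
  rw [← Int.fract_add_floor a]
  induction ⌊a⌋ using Int.induction_on with
  | zero =>
    simpa using isBigO_logGammaRatio_of_mem_Icc (Int.fract_nonneg a) (Int.fract_lt_one a).le
  | succ n ih =>
    rwa [Int.cast_add, Int.cast_one, ← add_assoc, isBigO_logGammaRatio_add_one_iff]
  | pred n ih =>
    rwa [← isBigO_logGammaRatio_add_one_iff, Int.cast_sub, Int.cast_one, ← add_sub_assoc,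
      sub_add_cancel]

theorem Gamma_add_div_Gamma_add_mul_rpow {a b t : ℝ} (ht : 0 < t) (hta : 0 < t + a)
    (htb : 0 < t + b) :
    Gamma (t + a) / Gamma (t + b) * t ^ (b - a) =
      exp (logGammaRatio a t - logGammaRatio b t) := by
  simp only [logGammaRatio, exp_sub, exp_log (Gamma_pos_of_pos hta),
    exp_log (Gamma_pos_of_pos htb), exp_log (Gamma_pos_of_pos ht), mul_comm _ (log t),
    ← rpow_def_of_pos ht, rpow_sub ht]
  have := Gamma_pos_of_pos ht
  field_simp

/-- Asymptotics of Gamma quotients: `Γ(t+a)/Γ(t+b) = t^(a-b)(1 + O(1/t))` as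
`t → +∞`; equivalently there are `C, t₀ > 0` with
`|Γ(t+a)/Γ(t+b) · t^(b-a) − 1| ≤ C/t` for `t ≥ t₀`. -/
theorem gamma_ratio_asymptotic (a b : ℝ) :
    ∃ C t₀ : ℝ, 0 < C ∧ 0 < t₀ ∧ ∀ t : ℝ, t₀ ≤ t →
      |Real.Gamma (t + a) / Real.Gamma (t + b) * t ^ (b - a) - 1| ≤ C / t := by
  apply exists_pos_abs_le_div_of_isBigO_inv
  refine (isBigO_exp_sub_one ((isBigO_logGammaRatio a).sub (isBigO_logGammaRatio b))
    tendsto_inv_atTop_zero).congr' ?_ EventuallyEq.rfl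
  filter_upwards [eventually_gt_atTop 0, eventually_gt_atTop (-a), eventually_gt_atTop (-b)]
    with t ht hta htb
  rw [Gamma_add_div_Gamma_add_mul_rpow ht (by linarith) (by linarith)]
end

section
/- Let α > 0, n ≥ 1, r > 0, M > 0, and suppose complex sequences (a_p)_{p≥0} and (p_{j,k})_{j≥0, 0≤k≤n−1} satisfy the recurrence a_{m+n}·Γ((m+n)α+1)/Γ(mα+1) = −∑_{k=0}^{n−1} ∑_{s=0}^{m} a_{s+k}·p_{m−s,k}·Γ((s+k)α+1)/Γ(sα+1) for all m ≥ 0, together with |p_{j,k}| ≤ M/r^(jα) for all j, k. Then there exists a sequence of positive reals (β_p) with β_p → 0 such that |a_p| ≤ β_p · ∏_{j=1}^{p−1}(r^(−α) + β_j) for all p ≥ 0; in particular limsup_{p→∞} |a_p|^(1/p) ≤ r^(−α). -/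
/-!
Put `ρ = r^(-α)` and `b_q = ‖a_q‖ / ρ^q`. By log-convexity of `Γ`, the ratio `Γ(x + c) / Γ(x)`
is nondecreasing in `x`, so every `Γ((s+k)α+1) / Γ(sα+1)` with `s ≤ m` in the recurrence may be
replaced by its value at `s = m`. This gives `b_{m+n} ≤ ε_m (1 + ∑_{q<m+n} b_q)`, where `ε_m` is a finite sum
of ratios `Γ((m+k)α+1) / Γ((m+n)α+1)`, `k < n`, which tend to `0` since
`log Γ(x + c) - log Γ(x) ≥ c log(x - 1)`. A discrete Grönwall inequality bounds the partial sums
by `C ∏_{i<m} (1 + ε_i)`, which is the product majorant with `β_{n+m} = ρ ε_m C`. Finally, once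
`ρ + β_j < ρ'`, the majorant is `O(ρ'^q)`, whence the bound on the `limsup`.
-/

open Finset Filter

namespace Real

open Set

theorem Gamma_add_div_Gamma_eq_exp {x c : ℝ} (hx : 0 < x) (hc : 0 ≤ c) :
    Gamma (x + c) / Gamma x = exp (log (Gamma (x + c)) - log (Gamma x)) := by
  rw [exp_sub, exp_log (Gamma_pos_of_pos (by linarith)), exp_log (Gamma_pos_of_pos hx)]

theorem monotoneOn_Gamma_add_div_Gamma {c : ℝ} (hc : 0 ≤ c) :
    MonotoneOn (fun x => Gamma (x + c) / Gamma x) (Ioi 0) := by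
  intro x hx y hy hxy
  simp only [Gamma_add_div_Gamma_eq_exp hx hc, Gamma_add_div_Gamma_eq_exp hy hc, exp_le_exp]
  rcases hc.eq_or_lt with rfl | hc
  · simp
  have hx' : x + c ∈ Ioi (0 : ℝ) := mem_Ioi.2 (by linarith [mem_Ioi.1 hx])
  have hy' : y + c ∈ Ioi (0 : ℝ) := mem_Ioi.2 (by linarith [mem_Ioi.1 hy])
  -- slope on `[x, x + c]` ≤ slope on `[x, y + c]` ≤ slope on `[y, y + c]`
  have h := (convexOn_log_Gamma.slope_mono hx ⟨hx', by simp [hc.ne']⟩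
    ⟨hy', by simp; linarith⟩ (by linarith)).trans
    (slope_comm (log ∘ Gamma) x (y + c) ▸ slope_comm (log ∘ Gamma) y (y + c) ▸
      convexOn_log_Gamma.slope_mono hy' ⟨hx, by simp; linarith⟩ ⟨hy, by simp; linarith⟩ hxy)
  simpa [slope_def_field, div_le_div_iff_of_pos_right hc] using h

theorem tendsto_log_Gamma_add_sub_log_Gamma {c : ℝ} (hc : 0 < c) :
    Tendsto (fun x => log (Gamma (x + c)) - log (Gamma x)) atTop atTop := by
  have hlog : Tendsto (fun x : ℝ => c * log (x - 1)) atTop atTop :=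
    (tendsto_log_atTop.comp (tendsto_atTop_add_const_right _ (-1) tendsto_id)).const_mul_atTop hc
  refine tendsto_atTop_mono' _ ?_ hlog
  filter_upwards [eventually_gt_atTop 1] with x hx
  have hx1 : 0 < x - 1 := by linarith
  have h := convexOn_log_Gamma.slope_mono_adjacent (mem_Ioi.2 hx1)
    (mem_Ioi.2 (by linarith : 0 < x + c)) (by linarith : x - 1 < x) (by linarith : x < x + c)
  have hrec : log (Gamma x) - log (Gamma (x - 1)) = log (x - 1) := by
    rw [sub_eq_iff_eq_add, ← log_mul hx1.ne' (Gamma_pos_of_pos hx1).ne', ← Gamma_add_one hx1.ne',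
      sub_add_cancel]
  simp only [Function.comp_apply, sub_sub_cancel, div_one, add_sub_cancel_left, hrec] at h
  rwa [le_div_iff₀ hc, mul_comm] at h

theorem tendsto_Gamma_div_Gamma_add {c : ℝ} (hc : 0 < c) :
    Tendsto (fun x => Gamma x / Gamma (x + c)) atTop (nhds 0) := by
  refine (tendsto_exp_neg_atTop_nhds_zero.comp (tendsto_log_Gamma_add_sub_log_Gamma hc)).congr' ?_
  filter_upwards [eventually_gt_atTop 0] with x hx
  rw [Function.comp_apply, ← one_div_div, Gamma_add_div_Gamma_eq_exp hx hc.le, exp_neg, one_div]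

end Real

/-- `𝔻_α^k x^((s+k)α) = gammaRatio α s k • x^(sα)`. -/
noncomputable def gammaRatio (α : ℝ) (s k : ℕ) : ℝ :=
  Real.Gamma (((s : ℝ) + k) * α + 1) / Real.Gamma ((s : ℝ) * α + 1)

section gammaRatio

variable {α : ℝ}

theorem gammaRatio_pos (hα : 0 ≤ α) (s k : ℕ) : 0 < gammaRatio α s k :=
  div_pos (Real.Gamma_pos_of_pos (by positivity)) (Real.Gamma_pos_of_pos (by positivity))

theorem gammaRatio_mono (hα : 0 ≤ α) (k : ℕ) : Monotone fun s => gammaRatio α s k := by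
  intro s m hsm
  have h := Real.monotoneOn_Gamma_add_div_Gamma (c := k * α) (by positivity)
    (Set.mem_Ioi.2 (by positivity : (0 : ℝ) < s * α + 1))
    (Set.mem_Ioi.2 (by positivity : (0 : ℝ) < m * α + 1)) (by gcongr)
  simpa only [gammaRatio, add_mul, add_right_comm] using h

theorem tendsto_gammaRatio_div_gammaRatio (hα : 0 < α) {k n : ℕ} (hkn : k < n) :
    Tendsto (fun m => gammaRatio α m k / gammaRatio α m n) atTop (nhds 0) := by
  have hc : 0 < ((n : ℝ) - k) * α := mul_pos (sub_pos.2 (Nat.cast_lt.2 hkn)) hα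
  have hx : Tendsto (fun m : ℕ => ((m : ℝ) + k) * α + 1) atTop atTop :=
    tendsto_atTop_add_const_right _ 1 ((tendsto_atTop_add_const_right _ _
      tendsto_natCast_atTop_atTop).atTop_mul_const hα)
  refine ((Real.tendsto_Gamma_div_Gamma_add hc).comp hx).congr fun m => ?_
  have hΓ : Real.Gamma ((m : ℝ) * α + 1) ≠ 0 := (Real.Gamma_pos_of_pos (by positivity)).ne'
  simp only [Function.comp_apply, gammaRatio, div_div_div_cancel_right₀ hΓ]
  ring_nf

end gammaRatio

/-- The rate `ε_m` in `‖a_{m+n}‖ / ρ^(m+n) ≤ ε_m (1 + ∑_{q<m+n} ‖a_q‖ / ρ^q)`. -/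
noncomputable def recurrenceRate (α M ρ : ℝ) (n m : ℕ) : ℝ :=
  M * ∑ k ∈ range n, gammaRatio α m k / gammaRatio α m n * (ρ ^ k / ρ ^ n)

theorem recurrenceRate_pos {α M ρ : ℝ} {n : ℕ} (hα : 0 ≤ α) (hM : 0 < M) (hρ : 0 < ρ)
    (hn : 1 ≤ n) (m : ℕ) : 0 < recurrenceRate α M ρ n m := by
  have hg := gammaRatio_pos hα
  exact mul_pos hM (sum_pos (fun k _ => mul_pos (div_pos (hg m k) (hg m n)) (by positivity))
    ⟨0, mem_range.2 hn⟩)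

theorem tendsto_recurrenceRate {α : ℝ} (hα : 0 < α) (M ρ : ℝ) (n : ℕ) :
    Tendsto (recurrenceRate α M ρ n) atTop (nhds 0) := by
  rw [show (0 : ℝ) = M * ∑ k ∈ range n, 0 * (ρ ^ k / ρ ^ n) by simp]
  exact (tendsto_finsetSum (range n) fun k hk =>
    (tendsto_gammaRatio_div_gammaRatio hα (mem_range.1 hk)).mul_const _).const_mul M

theorem sum_range_shift_le_sum_range {f : ℕ → ℝ} (hf : ∀ q, 0 ≤ f q) {k l N : ℕ}
    (h : l + k ≤ N) : ∑ s ∈ range l, f (s + k) ≤ ∑ q ∈ range N, f q := by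
  rw [range_eq_Ico, sum_Ico_add', zero_add]
  exact sum_le_sum_of_subset_of_nonneg (fun q hq => by simp at hq ⊢; omega) fun q _ _ => hf q

section recurrence

variable {α M ρ : ℝ} {n : ℕ} {a : ℕ → ℂ} {p : ℕ → ℕ → ℂ}

theorem norm_mul_gammaRatio_le (hα : 0 ≤ α) (hM : 0 ≤ M) (hρ : 0 ≤ ρ)
    (hp : ∀ j k, k < n → ‖p j k‖ ≤ M * ρ ^ j)
    (hrec : ∀ m, a (m + n) * gammaRatio α m n =
      -∑ k ∈ range n, ∑ s ∈ range (m + 1), a (s + k) * p (m - s) k * gammaRatio α s k)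
    (m : ℕ) : ‖a (m + n)‖ * gammaRatio α m n ≤
      ∑ k ∈ range n, ∑ s ∈ range (m + 1), ‖a (s + k)‖ * (M * ρ ^ (m - s)) * gammaRatio α m k := by
  have hnorm (s k : ℕ) : ‖(gammaRatio α s k : ℂ)‖ = gammaRatio α s k := by
    rw [Complex.norm_real, Real.norm_of_nonneg (gammaRatio_pos hα s k).le]
  rw [← hnorm, ← norm_mul, hrec, norm_neg]
  refine norm_sum_le_of_le _ fun k hk => norm_sum_le_of_le _ fun s hs => ?_
  rw [norm_mul, norm_mul, hnorm]
  exact mul_le_mul (mul_le_mul_of_nonneg_left (hp _ _ (mem_range.1 hk)) (norm_nonneg _))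
    (gammaRatio_mono hα k (Nat.lt_succ_iff.1 (mem_range.1 hs))) (gammaRatio_pos hα s k).le
    (mul_nonneg (norm_nonneg _) (by positivity))

theorem norm_div_pow_le_recurrenceRate_mul (hα : 0 ≤ α) (hM : 0 ≤ M) (hρ : 0 < ρ)
    (hp : ∀ j k, k < n → ‖p j k‖ ≤ M * ρ ^ j)
    (hrec : ∀ m, a (m + n) * gammaRatio α m n =
      -∑ k ∈ range n, ∑ s ∈ range (m + 1), a (s + k) * p (m - s) k * gammaRatio α s k)
    (m : ℕ) : ‖a (m + n)‖ / ρ ^ (m + n) ≤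
      recurrenceRate α M ρ n m * (1 + ∑ q ∈ range (m + n), ‖a q‖ / ρ ^ q) := by
  set S := 1 + ∑ q ∈ range (m + n), ‖a q‖ / ρ ^ q
  have hg := gammaRatio_pos hα
  have hshift : ∀ k ∈ range n, ∑ s ∈ range (m + 1), ‖a (s + k)‖ / ρ ^ (s + k) ≤ S := fun k hk =>
    (sum_range_shift_le_sum_range (f := fun q => ‖a q‖ / ρ ^ q) (fun q => by positivity)
      (by rw [mem_range] at hk; omega : m + 1 + k ≤ m + n)).trans
      (le_add_of_nonneg_left zero_le_one)
  have h : ‖a (m + n)‖ * gammaRatio α m n ≤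
      recurrenceRate α M ρ n m * S * (gammaRatio α m n * ρ ^ (m + n)) := calc
    _ ≤ ∑ k ∈ range n, ∑ s ∈ range (m + 1),
          ‖a (s + k)‖ * (M * ρ ^ (m - s)) * gammaRatio α m k :=
      norm_mul_gammaRatio_le hα hM hρ.le hp hrec m
    _ = ∑ k ∈ range n, M * gammaRatio α m k * ρ ^ (m + k) *
          ∑ s ∈ range (m + 1), ‖a (s + k)‖ / ρ ^ (s + k) := by
      refine sum_congr rfl fun k _ => ?_
      rw [mul_sum]
      refine sum_congr rfl fun s hs => ?_
      have hsplit : m + k = (m - s) + (s + k) := by rw [mem_range] at hs; omega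
      rw [hsplit, pow_add]
      field_simp
    _ ≤ ∑ k ∈ range n, M * gammaRatio α m k * ρ ^ (m + k) * S := by
      refine sum_le_sum fun k hk => mul_le_mul_of_nonneg_left (hshift k hk) ?_
      have := hg m k
      positivity
    _ = recurrenceRate α M ρ n m * S * (gammaRatio α m n * ρ ^ (m + n)) := by
      simp only [recurrenceRate, sum_mul, mul_sum]
      refine sum_congr rfl fun k _ => ?_
      have := hg m n
      field_simp
      ring
  rw [div_le_iff₀ (by positivity)]
  exact le_of_mul_le_mul_right (h.trans_eq (by ring)) (hg m n)

end recurrence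

/-- A discrete Grönwall inequality. -/
theorem one_add_sum_range_le_mul_prod {b ε : ℕ → ℝ} {n : ℕ} (hε : ∀ m, 0 ≤ ε m)
    (h : ∀ m, b (n + m) ≤ ε m * (1 + ∑ q ∈ range (n + m), b q)) (m : ℕ) :
    1 + ∑ q ∈ range (n + m), b q ≤ (1 + ∑ q ∈ range n, b q) * ∏ i ∈ range m, (1 + ε i) := by
  induction m with
  | zero => simp
  | succ m ih =>
    calc 1 + ∑ q ∈ range (n + (m + 1)), b q = 1 + ∑ q ∈ range (n + m), b q + b (n + m) := by
          rw [← add_assoc, sum_range_succ, add_assoc]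
      _ ≤ (1 + ε m) * (1 + ∑ q ∈ range (n + m), b q) := by linarith [h m]
      _ ≤ (1 + ε m) * ((1 + ∑ q ∈ range n, b q) * ∏ i ∈ range m, (1 + ε i)) := by
          gcongr; linarith [hε m]
      _ = (1 + ∑ q ∈ range n, b q) * ∏ i ∈ range (m + 1), (1 + ε i) := by
          rw [prod_range_succ]; ring

theorem pow_card_le_prod_add {ρ : ℝ} {β : ℕ → ℝ} (hρ : 0 ≤ ρ) (hβ : ∀ j, 0 ≤ β j)
    (t : Finset ℕ) : ρ ^ t.card ≤ ∏ j ∈ t, (ρ + β j) := by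
  rw [← prod_const]
  exact prod_le_prod (fun _ _ => hρ) fun j _ => le_add_of_nonneg_right (hβ j)

theorem pow_mul_prod_le_prod_Ico {ρ : ℝ} {β ε : ℕ → ℝ} {n : ℕ} (hn : 1 ≤ n) (hρ : 0 ≤ ρ)
    (hβ : ∀ j, 0 ≤ β j) (hε : ∀ i, 0 ≤ ε i) (h : ∀ i, ρ * (1 + ε i) ≤ ρ + β (n + i)) (m : ℕ) :
    ρ ^ (n - 1 + m) * ∏ i ∈ range m, (1 + ε i) ≤ ∏ j ∈ Ico 1 (n + m), (ρ + β j) := by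
  induction m with
  | zero => simpa using pow_card_le_prod_add hρ hβ (Ico 1 n)
  | succ m ih =>
    rw [← Nat.add_assoc n m 1, prod_Ico_succ_top (by omega), prod_range_succ, ← add_assoc,
      pow_succ]
    calc ρ ^ (n - 1 + m) * ρ * ((∏ i ∈ range m, (1 + ε i)) * (1 + ε m))
        = ρ ^ (n - 1 + m) * (∏ i ∈ range m, (1 + ε i)) * (ρ * (1 + ε m)) := by ring
      _ ≤ (∏ j ∈ Ico 1 (n + m), (ρ + β j)) * (ρ + β (n + m)) :=
          mul_le_mul ih (h m) (mul_nonneg hρ (by linarith [hε m]))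
            (prod_nonneg fun j _ => add_nonneg hρ (hβ j))

theorem exists_le_mul_prod_Ico {u ε : ℕ → ℝ} {ρ C : ℝ} {n : ℕ} (hn : 1 ≤ n) (hρ : 0 < ρ)
    (hC : 1 ≤ C) (hε : ∀ m, 0 < ε m) (hε0 : Tendsto ε atTop (nhds 0))
    (hu : ∀ m, u (n + m) / ρ ^ (n + m) ≤ ε m * (C * ∏ i ∈ range m, (1 + ε i))) :
    ∃ β : ℕ → ℝ, (∀ q, 0 < β q) ∧ Tendsto β atTop (nhds 0) ∧
      ∀ q, u q ≤ β q * ∏ j ∈ Ico 1 q, (ρ + β j) := by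
  -- with `C ≥ 1` this choice gives `ρ + β_{n+i} ≥ ρ (1 + ε_i)`
  set β : ℕ → ℝ := fun q => if q < n then max (u q / ρ ^ (q - 1)) 1 else ρ * ε (q - n) * C
  have hβn (m : ℕ) : β (n + m) = ρ * ε m * C := by simp [β]
  have hβ (q : ℕ) : 0 < β q := by
    by_cases hq : q < n
    · simp only [β, if_pos hq]; exact lt_max_of_lt_right one_pos
    · simp only [β, if_neg hq]; have := hε (q - n); positivity
  refine ⟨β, hβ, ?_, fun q => ?_⟩
  · have h := ((hε0.comp (tendsto_sub_atTop_nat n)).const_mul ρ).mul_const C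
    rw [mul_zero, zero_mul] at h
    refine h.congr' ?_
    filter_upwards [eventually_ge_atTop n] with q hq
    simp [β, not_lt.2 hq, mul_assoc]
  by_cases hq : q < n
  · calc u q = u q / ρ ^ (q - 1) * ρ ^ (Ico 1 q).card := by
          rw [Nat.card_Ico]; field_simp
      _ ≤ β q * ∏ j ∈ Ico 1 q, (ρ + β j) := by
          gcongr
          · exact (hβ q).le
          · simp only [β, if_pos hq]; exact le_max_left _ _
          · exact pow_card_le_prod_add hρ.le (fun j => (hβ j).le) _
  obtain ⟨m, rfl⟩ : ∃ m, q = n + m := ⟨q - n, by omega⟩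
  have hprod := pow_mul_prod_le_prod_Ico hn hρ.le (fun j => (hβ j).le) (fun i => (hε i).le)
    (fun i => by
      rw [hβn]; linarith [mul_le_mul_of_nonneg_left hC (mul_pos hρ (hε i)).le]) m
  have hpow : ρ ^ (n + m) = ρ * ρ ^ (n - 1 + m) := by rw [← pow_succ']; congr 1; omega
  calc u (n + m) = u (n + m) / ρ ^ (n + m) * ρ ^ (n + m) := by field_simp
    _ ≤ ε m * (C * ∏ i ∈ range m, (1 + ε i)) * ρ ^ (n + m) := by gcongr; exact hu m
    _ = β (n + m) * (ρ ^ (n - 1 + m) * ∏ i ∈ range m, (1 + ε i)) := by rw [hβn, hpow]; ring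
    _ ≤ β (n + m) * ∏ j ∈ Ico 1 (n + m), (ρ + β j) := by gcongr; exact (hβ _).le

theorem exists_eventually_le_mul_pow_of_le_mul_prod_Ico {u β : ℕ → ℝ} {ρ ρ' : ℝ}
    (hρ : 0 < ρ) (hρρ' : ρ < ρ') (hβ : ∀ j, 0 ≤ β j) (hβ0 : Tendsto β atTop (nhds 0))
    (hu : ∀ q, u q ≤ β q * ∏ j ∈ Ico 1 q, (ρ + β j)) :
    ∃ D > 0, ∀ᶠ q in atTop, u q ≤ D * ρ' ^ q := by
  have hρ' : 0 < ρ' := hρ.trans hρρ'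
  obtain ⟨N, hN⟩ := eventually_atTop.1 <|
    (hβ0.eventually (gt_mem_nhds (sub_pos.2 hρρ'))).and (eventually_ge_atTop 1)
  set P := ∏ j ∈ Ico 1 N, (ρ + β j)
  have hP : 0 < P := prod_pos fun j _ => by linarith [hβ j]
  refine ⟨ρ' * P / ρ' ^ N, by positivity, ?_⟩
  filter_upwards [eventually_ge_atTop N] with q hq
  have htail : ∏ j ∈ Ico N q, (ρ + β j) ≤ ρ' ^ (q - N) := by
    rw [← Nat.card_Ico, ← prod_const]
    exact prod_le_prod (fun j _ => by linarith [hβ j])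
      fun j hj => by linarith [(hN j (mem_Ico.1 hj).1).1]
  calc u q ≤ β q * (P * ∏ j ∈ Ico N q, (ρ + β j)) := by
        rw [prod_Ico_consecutive _ (hN N le_rfl).2 hq]; exact hu q
    _ ≤ ρ' * (P * ρ' ^ (q - N)) :=
        mul_le_mul (by linarith [(hN q hq).1]) (mul_le_mul_of_nonneg_left htail hP.le)
          (mul_nonneg hP.le (prod_nonneg fun j _ => by linarith [hβ j])) hρ'.le
    _ = ρ' * P / ρ' ^ N * ρ' ^ q := by
        rw [← Nat.sub_add_cancel hq, pow_add, Nat.add_sub_cancel]; field_simp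

theorem limsup_rpow_one_div_le_of_eventually_le_mul_pow {u : ℕ → ℝ} {ρ : ℝ} (hρ : 0 ≤ ρ)
    (hu : ∀ q, 0 ≤ u q) (h : ∀ ρ' > ρ, ∃ D > 0, ∀ᶠ q in atTop, u q ≤ D * ρ' ^ q) :
    limsup (fun q : ℕ => u q ^ ((1 : ℝ) / q)) atTop ≤ ρ := by
  refine le_of_forall_gt_imp_ge_of_dense fun c hc => ?_
  obtain ⟨ρ', hρρ', hρ'c⟩ := exists_between hc
  obtain ⟨D, hD, hle⟩ := h ρ' hρρ'
  have hroot : Tendsto (fun q : ℕ => D ^ ((1 : ℝ) / q) * ρ') atTop (nhds ρ') := by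
    have h0 := ((Real.continuousAt_const_rpow hD.ne').tendsto.comp
      tendsto_one_div_atTop_nhds_zero_nat).mul_const ρ'
    rwa [Real.rpow_zero, one_mul] at h0
  refine limsup_le_of_le (isCoboundedUnder_le_of_le _ fun q => Real.rpow_nonneg (hu q) _) ?_
  filter_upwards [hle, hroot.eventually (gt_mem_nhds hρ'c), eventually_gt_atTop 0]
    with q hq hlt hq0
  have hρ' : 0 ≤ ρ' := hρ.trans hρρ'.le
  calc u q ^ ((1 : ℝ) / q) ≤ (D * ρ' ^ q) ^ ((1 : ℝ) / q) := by gcongr; exact hu q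
    _ = D ^ ((1 : ℝ) / q) * ρ' := by
        rw [Real.mul_rpow hD.le (pow_nonneg hρ' q), one_div,
          Real.pow_rpow_inv_natCast hρ' hq0.ne']
    _ ≤ c := hlt.le

theorem div_rpow_natCast_mul_eq_mul_pow {r : ℝ} (hr : 0 < r) (M α : ℝ) (j : ℕ) :
    M / r ^ ((j : ℝ) * α) = M * (r ^ (-α)) ^ j := by
  rw [← Real.rpow_natCast, ← Real.rpow_mul hr.le, div_eq_mul_inv, ← Real.rpow_neg hr.le]
  ring_nf

/-- Majorant estimate for coefficients of an `α`-analytic solution: if `(aₚ)` satisfies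
the recurrence coming from the fractional equation and the coefficients `p_{j,k}` obey
`|p_{j,k}| ≤ M/r^(jα)`, then there is a positive sequence `βₚ → 0` with
`|aₚ| ≤ βₚ ∏_{j=1}^{p-1}(r^(−α) + βⱼ)`; in particular
`limsup |aₚ|^(1/p) ≤ r^(−α)`. -/
theorem coefficient_majorant_estimate (α : ℝ) (hα : 0 < α) (n : ℕ) (hn : 1 ≤ n)
    (r M : ℝ) (hr : 0 < r) (hM : 0 < M) (a : ℕ → ℂ) (p : ℕ → ℕ → ℂ)
    (hp : ∀ j k : ℕ, k < n → ‖p j k‖ ≤ M / r ^ ((j : ℝ) * α))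
    (hrec : ∀ m : ℕ,
      a (m + n) * (Real.Gamma (((m : ℝ) + n) * α + 1) / Real.Gamma ((m : ℝ) * α + 1))
        = -∑ k ∈ Finset.range n, ∑ s ∈ Finset.range (m + 1),
            a (s + k) * p (m - s) k *
              (Real.Gamma (((s : ℝ) + k) * α + 1) / Real.Gamma ((s : ℝ) * α + 1))) :
    ∃ β : ℕ → ℝ, (∀ q : ℕ, 0 < β q) ∧ Tendsto β atTop (nhds 0) ∧
      (∀ q : ℕ, ‖a q‖ ≤ β q * ∏ j ∈ Finset.Icc 1 (q - 1), (r ^ (-α) + β j)) ∧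
      Filter.limsup (fun q : ℕ => ‖a q‖ ^ ((1 : ℝ) / q)) atTop ≤ r ^ (-α) := by
  set ρ := r ^ (-α)
  have hρ : 0 < ρ := Real.rpow_pos_of_pos hr _
  have hp' (j k : ℕ) (hk : k < n) : ‖p j k‖ ≤ M * ρ ^ j :=
    (hp j k hk).trans_eq (div_rpow_natCast_mul_eq_mul_pow hr M α j)
  have hrec' : ∀ m, a (m + n) * gammaRatio α m n =
      -∑ k ∈ range n, ∑ s ∈ range (m + 1), a (s + k) * p (m - s) k * gammaRatio α s k := by
    simpa only [gammaRatio, Complex.ofReal_div] using hrec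
  set ε := recurrenceRate α M ρ n
  have hε := recurrenceRate_pos hα.le hM hρ hn
  have hstep (m : ℕ) :
      ‖a (n + m)‖ / ρ ^ (n + m) ≤ ε m * (1 + ∑ q ∈ range (n + m), ‖a q‖ / ρ ^ q) := by
    rw [add_comm n m]
    exact norm_div_pow_le_recurrenceRate_mul hα.le hM.le hρ hp' hrec' m
  obtain ⟨β, hβ, hβ0, hbound⟩ := exists_le_mul_prod_Ico (u := fun q => ‖a q‖) hn hρ
    (C := 1 + ∑ q ∈ range n, ‖a q‖ / ρ ^ q)
    (le_add_of_nonneg_right (sum_nonneg fun q _ => by positivity)) hε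
    (tendsto_recurrenceRate hα M ρ n) fun m => (hstep m).trans <|
      mul_le_mul_of_nonneg_left (one_add_sum_range_le_mul_prod (fun i => (hε i).le) hstep m)
        (hε m).le
  have hIcc (q : ℕ) : Icc 1 (q - 1) = Ico 1 q := by ext; simp; omega
  refine ⟨β, hβ, hβ0, fun q => hIcc q ▸ hbound q, ?_⟩
  exact limsup_rpow_one_div_le_of_eventually_le_mul_pow hρ.le (fun q => norm_nonneg _)
    fun ρ' hρρ' => exists_eventually_le_mul_pow_of_le_mul_prod_Ico hρ hρρ' (fun j => (hβ j).le)
      hβ0 hbound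
end

section
/- Let α > 0 and f be an entire function with f(z) = ∑_{n=0}^∞ a_n z^n. Then the Gelfond–Leontiev integral operator (ℐ_α f)(z) = ∑_{n=0}^∞ a_n (Γ(nα+1)/Γ((n+1)α+1)) z^(n+1) admits the integral representation (ℐ_α f)(z) = (z/Γ(α)) ∫₀¹ (1−t)^(α−1) f(z t^α) dt, and satisfies ℐ_α(𝒟_α f)(z) = f(z) − f(0), where (𝒟_α f)(z) = ∑_{n≥1} a_n (Γ(nα+1)/Γ(nα+1−α)) z^(n−1). -/
/-!
Expanding `f (z t^α) = ∑ aₙ zⁿ t^{nα}` under the integral, the series is dominated by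
`(1 - t)^{α-1} ∑ ‖aₙ‖ ‖z‖ⁿ`, which is integrable on `[0, 1]`, so it may be integrated termwise;
each term is a Beta integral `B(nα + 1, α) = Γ(nα + 1) Γ(α) / Γ(nα + α + 1)`. In `ℐ_α (𝒟_α f)`
the Gamma factors telescope to `1`, leaving the power series of `f` without its constant term.
-/

open intervalIntegral MeasureTheory Set
open scoped Interval

theorem Summable.summable_norm_mul_pow_of_norm_lt {𝕜 : Type*} [NormedDivisionRing 𝕜]
    {a : ℕ → 𝕜} {w z : 𝕜} (hw : Summable fun n => a n * w ^ n) (hzw : ‖z‖ < ‖w‖) :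
    Summable fun n => ‖a n‖ * ‖z‖ ^ n := by
  obtain ⟨C, hC⟩ := hw.tendsto_atTop_zero.norm.bddAbove_range
  have hw0 : 0 < ‖w‖ := (norm_nonneg z).trans_lt hzw
  refine Summable.of_nonneg_of_le (fun n => by positivity) (fun n => ?_)
    ((summable_geometric_of_lt_one (by positivity) ((div_lt_one hw0).2 hzw)).mul_left C)
  calc ‖a n‖ * ‖z‖ ^ n = ‖a n * w ^ n‖ * (‖z‖ / ‖w‖) ^ n := by
        rw [norm_mul, norm_pow, div_pow]; field_simp
    _ ≤ C * (‖z‖ / ‖w‖) ^ n := by gcongr; exact hC ⟨n, rfl⟩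

theorem intervalIntegrable_ofReal_one_sub_rpow {v : ℝ} (hv : 0 < v) :
    IntervalIntegrable (fun t : ℝ => (((1 - t) ^ (v - 1) : ℝ) : ℂ)) volume 0 1 := by
  have h := (intervalIntegrable_rpow' (a := 0) (b := 1)
    (r := v - 1) (by linarith)).comp_sub_left 1
  simp only [sub_zero, sub_self] at h
  exact ⟨h.symm.1.ofReal, h.symm.2.ofReal⟩

theorem integral_ofReal_one_sub_rpow_mul_rpow (u v : ℝ) :
    ∫ t in (0:ℝ)..1, (((1 - t) ^ (v - 1) : ℝ) : ℂ) * ((t ^ (u - 1) : ℝ) : ℂ)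
      = Complex.betaIntegral u v := by
  refine integral_congr fun t ht => ?_
  rw [uIcc_of_le zero_le_one] at ht
  rw [Complex.ofReal_cpow ht.1, Complex.ofReal_cpow (sub_nonneg.2 ht.2)]
  push_cast
  ring

theorem integral_ofReal_one_sub_rpow_mul_rpow_eq_Gamma {u v : ℝ} (hu : 0 < u) (hv : 0 < v) :
    ∫ t in (0:ℝ)..1, (((1 - t) ^ (v - 1) : ℝ) : ℂ) * ((t ^ (u - 1) : ℝ) : ℂ)
      = ((Real.Gamma u * Real.Gamma v / Real.Gamma (u + v) : ℝ) : ℂ) := by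
  rw [integral_ofReal_one_sub_rpow_mul_rpow,
    Complex.betaIntegral_eq_Gamma_mul_div _ _ (by simpa) (by simpa)]
  push_cast [← Complex.Gamma_ofReal]
  rfl

theorem hasSum_intervalIntegral_mul_powerSeries {w g : ℝ → ℂ} {a : ℕ → ℂ} {f : ℂ → ℂ}
    {b c r : ℝ} (hw : IntervalIntegrable w volume b c)
    (hg : AEStronglyMeasurable g (volume.restrict (Ι b c))) (hgr : ∀ t ∈ Ι b c, ‖g t‖ ≤ r)
    (ha : Summable fun n => ‖a n‖ * r ^ n)
    (hf : ∀ t ∈ Ι b c, HasSum (fun n => a n * g t ^ n) (f (g t))) :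
    HasSum (fun n => ∫ t in b..c, w t * (a n * g t ^ n)) (∫ t in b..c, w t * f (g t)) := by
  refine hasSum_integral_of_dominated_convergence (fun n t => ‖w t‖ * (‖a n‖ * r ^ n))
    (fun n => hw.def'.aestronglyMeasurable.mul (aestronglyMeasurable_const.mul (hg.pow n)))
    (fun n => ae_of_all _ fun t ht => ?_) (ae_of_all _ fun t _ => ha.mul_left _) ?_
    (ae_of_all _ fun t ht => (hf t ht).mul_left (w t))
  · rw [norm_mul, norm_mul, norm_pow]
    gcongr
    exact hgr t ht
  · simp_rw [tsum_mul_left]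
    exact hw.norm.mul_const _

theorem hasSum_integral_one_sub_rpow_mul_comp_mul_rpow {α : ℝ} (hα : 0 < α) {a : ℕ → ℂ}
    {f : ℂ → ℂ} (hf : ∀ z : ℂ, HasSum (fun n : ℕ => a n * z ^ n) (f z)) (z : ℂ) :
    HasSum (fun n : ℕ => a n * z ^ n *
        ((Real.Gamma ((n : ℝ) * α + 1) * Real.Gamma α / Real.Gamma ((n : ℝ) * α + 1 + α) : ℝ) : ℂ))
      (∫ t in (0:ℝ)..1, (((1 - t) ^ (α - 1) : ℝ) : ℂ) * f (z * ((t ^ α : ℝ) : ℂ))) := by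
  have ha : Summable fun n => ‖a n‖ * ‖z‖ ^ n :=
    (hf ((‖z‖ + 1 : ℝ) : ℂ)).summable.summable_norm_mul_pow_of_norm_lt (by
      rw [Complex.norm_real, Real.norm_of_nonneg (by positivity)]; linarith)
  have hg : ∀ t ∈ Ι (0:ℝ) 1, ‖z * ((t ^ α : ℝ) : ℂ)‖ ≤ ‖z‖ := fun t ht => by
    rw [uIoc_of_le zero_le_one] at ht
    rw [norm_mul, Complex.norm_real, Real.norm_of_nonneg (Real.rpow_nonneg ht.1.le α)]
    exact mul_le_of_le_one_right (norm_nonneg z) (Real.rpow_le_one ht.1.le ht.2 hα.le)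
  convert hasSum_intervalIntegral_mul_powerSeries (intervalIntegrable_ofReal_one_sub_rpow hα)
    (by fun_prop) hg ha fun t _ => hf _ using 1
  funext n
  rw [← integral_ofReal_one_sub_rpow_mul_rpow_eq_Gamma (by positivity) hα,
    ← intervalIntegral.integral_const_mul]
  refine integral_congr fun t ht => ?_
  rw [uIcc_of_le zero_le_one] at ht
  have hpow : ((t ^ α : ℝ) : ℂ) ^ n = ((t ^ ((n : ℝ) * α + 1 - 1) : ℝ) : ℂ) := by
    rw [← Complex.ofReal_pow, ← Real.rpow_natCast, ← Real.rpow_mul ht.1]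
    ring_nf
  simp only [mul_pow, hpow]
  ring

/-- For an entire `f(z) = ∑ aₙ zⁿ`, the Gelfond–Leontiev integral operator
`(ℐ_α f)(z) = ∑ aₙ (Γ(nα+1)/Γ((n+1)α+1)) z^(n+1)` has the integral representation
`(ℐ_α f)(z) = (z/Γ(α)) ∫₀¹ (1-t)^(α-1) f(z t^α) dt`, and
`ℐ_α (𝒟_α f)(z) = f(z) − f(0)`, where
`(𝒟_α f)(z) = ∑_{n≥1} aₙ (Γ(nα+1)/Γ(nα+1-α)) z^(n-1)`. -/
theorem gelfond_leontiev_integral (α : ℝ) (hα : 0 < α) (a : ℕ → ℂ) (f : ℂ → ℂ)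
    (hf : ∀ z : ℂ, HasSum (fun n : ℕ => a n * z ^ n) (f z)) (z : ℂ) :
    (∑' n : ℕ, a n *
        (Real.Gamma ((n : ℝ) * α + 1) / Real.Gamma (((n : ℝ) + 1) * α + 1)) * z ^ (n + 1))
      = z / (Real.Gamma α : ℂ) *
          ∫ t in (0:ℝ)..1, (((1 - t) ^ (α - 1) : ℝ) : ℂ) * f (z * ((t ^ α : ℝ) : ℂ))
    ∧ (∑' n : ℕ, (a (n + 1) *
          (Real.Gamma (((n : ℝ) + 1) * α + 1) / Real.Gamma (((n : ℝ) + 1) * α + 1 - α))) *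
          (Real.Gamma ((n : ℝ) * α + 1) / Real.Gamma (((n : ℝ) + 1) * α + 1)) * z ^ (n + 1))
        = f z - a 0 := by
  have hΓ {x : ℝ} (hx : 0 < x) : (Real.Gamma x : ℂ) ≠ 0 :=
    Complex.ofReal_ne_zero.2 (Real.Gamma_pos_of_pos hx).ne'
  have hshift (n : ℕ) : ((n : ℝ) + 1) * α + 1 = (n : ℝ) * α + 1 + α := by ring
  constructor
  · rw [← (hasSum_integral_one_sub_rpow_mul_comp_mul_rpow hα hf z).tsum_eq, ← tsum_mul_left]
    refine tsum_congr fun n => ?_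
    have hΓα := hΓ hα
    have hΓnα := hΓ (show 0 < (n : ℝ) * α + 1 + α by positivity)
    rw [hshift]
    push_cast
    field_simp
    ring
  · have hcancel (n : ℕ) :
        (Real.Gamma (((n : ℝ) + 1) * α + 1) / Real.Gamma (((n : ℝ) + 1) * α + 1 - α) *
          (Real.Gamma ((n : ℝ) * α + 1) / Real.Gamma (((n : ℝ) + 1) * α + 1)) : ℂ) = 1 := by
      rw [hshift, add_sub_cancel_right, div_mul_div_cancel₀ (hΓ (by positivity)),
        div_self (hΓ (by positivity))]
    simp_rw [mul_assoc (a _) (_ / _) (_ / _), hcancel, mul_one]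
    simpa using ((hasSum_nat_add_iff' 1).2 (hf z)).tsum_eq
end
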